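/- Let f : X → ℝ be continuous and let U = (a,b) and V = (c,d) be two overlapping open intervals with a < c < b < d. If C is a connected component of f⁻¹(U) and C' is a connected component of f⁻¹(V), then C ∩ C' is nonempty if and only if C and C' contain a common connected component of f⁻¹((c,b)). -/

import Mathlib

open Set

/-! A component of `f ⁻¹' (c,b)` lies in the component of `f ⁻¹' (a,b)` and in the component of
`f ⁻¹' (c,d)` through any of its points, since `(c,b) = (a,b) ∩ (c,d)` is smaller than both.
Conversely a point common to `C` and `C'` lies in `f ⁻¹' (c,b)`, and its component there is the
required common component. -/

section ConnectedComponentIn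

variable {X : Type*} [TopologicalSpace X]

theorem connectedComponentIn_subset_of_mem {F G : Set X} {x y : X} (hFG : F ⊆ G)
    (hy : y ∈ connectedComponentIn G x) :
    connectedComponentIn F y ⊆ connectedComponentIn G x :=
  connectedComponentIn_eq hy ▸ connectedComponentIn_mono y hFG

theorem connectedComponentIn_inter_nonempty_iff {U V : Set X} {x x' : X} :
    (connectedComponentIn U x ∩ connectedComponentIn V x').Nonempty ↔
      ∃ y ∈ U ∩ V, connectedComponentIn (U ∩ V) y ⊆ connectedComponentIn U x ∧
        connectedComponentIn (U ∩ V) y ⊆ connectedComponentIn V x' := by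
  constructor
  · rintro ⟨y, hyU, hyV⟩
    exact ⟨y, ⟨connectedComponentIn_subset _ _ hyU, connectedComponentIn_subset _ _ hyV⟩,
      connectedComponentIn_subset_of_mem inter_subset_left hyU,
      connectedComponentIn_subset_of_mem inter_subset_right hyV⟩
  · rintro ⟨y, hy, hyU, hyV⟩
    exact ⟨y, hyU (mem_connectedComponentIn hy), hyV (mem_connectedComponentIn hy)⟩

end ConnectedComponentIn

theorem Ioo_inter_Ioo_of_le {α : Type*} [LinearOrder α] {a b c d : α} (hac : a ≤ c) (hbd : b ≤ d) :
    Ioo a b ∩ Ioo c d = Ioo c b := by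
  rw [Ioo_inter_Ioo, max_eq_right hac, min_eq_left hbd]

theorem components_intersect_iff_common_overlap_component_general
    {X : Type*} [TopologicalSpace X] (f : X → ℝ)
    (a b c d : ℝ) (hac : a < c) (hbd : b < d)
    (C C' : Set X)
    (hC : ∃ x ∈ f ⁻¹' Ioo a b, C = connectedComponentIn (f ⁻¹' Ioo a b) x)
    (hC' : ∃ x ∈ f ⁻¹' Ioo c d, C' = connectedComponentIn (f ⁻¹' Ioo c d) x) :
    (C ∩ C').Nonempty ↔
      ∃ D : Set X, (∃ x ∈ f ⁻¹' Ioo c b, D = connectedComponentIn (f ⁻¹' Ioo c b) x) ∧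
        D ⊆ C ∧ D ⊆ C' := by
  obtain ⟨x, -, rfl⟩ := hC
  obtain ⟨x', -, rfl⟩ := hC'
  have hW : f ⁻¹' Ioo a b ∩ f ⁻¹' Ioo c d = f ⁻¹' Ioo c b := by
    rw [← preimage_inter, Ioo_inter_Ioo_of_le hac.le hbd.le]
  rw [connectedComponentIn_inter_nonempty_iff, hW]
  constructor
  · rintro ⟨y, hy, hyC, hyC'⟩
    exact ⟨_, ⟨y, hy, rfl⟩, hyC, hyC'⟩
  · rintro ⟨D, ⟨y, hy, rfl⟩, hDC, hDC'⟩
    exact ⟨y, hy, hDC, hDC'⟩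

/-- For overlapping intervals `U = (a,b)` and `V = (c,d)` with
`a < c < b < d`, a component `C` of `f ⁻¹' U` and a component `C'` of `f ⁻¹' V`
intersect iff they contain a common connected component of `f ⁻¹' (c,b)`. -/
theorem components_intersect_iff_common_overlap_component
    {X : Type*} [TopologicalSpace X] (f : X → ℝ) (hf : Continuous f)
    (a b c d : ℝ) (hac : a < c) (hcb : c < b) (hbd : b < d)
    (C C' : Set X)
    (hC : ∃ x ∈ f ⁻¹' Ioo a b, C = connectedComponentIn (f ⁻¹' Ioo a b) x)
    (hC' : ∃ x ∈ f ⁻¹' Ioo c d, C' = connectedComponentIn (f ⁻¹' Ioo c d) x) :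
    (C ∩ C').Nonempty ↔
      ∃ D : Set X, (∃ x ∈ f ⁻¹' Ioo c b, D = connectedComponentIn (f ⁻¹' Ioo c b) x) ∧
        D ⊆ C ∧ D ⊆ C' :=
  components_intersect_iff_common_overlap_component_general f a b c d hac hbd C C' hC hC'
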